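/- arXiv:1302.2062 — 5 statements merged into one kernel-verified Lean document; each statement's English description precedes it below -/
import Mathlib

section
/- Let C be a right triangulated category with shift Σ, and M a rigid subcategory (Hom_C(M, ΣM) = 0) such that Σ restricted to M is fully faithful and such that for every right triangle M0 →f M1 →g X →h ΣM0 with M0, M1 ∈ M, the morphism g is a right M-approximation of X. Then for any such right triangle, the sequence Hom_M(−, M0) → Hom_M(−, M1) → Hom_C(−, X)|_M → 0 of M-modules (contravariant additive functors M → Ab) is exact; in particular Hom_C(−, X)|_M is a finitely presented M-module. -/
open CategoryTheory CategoryTheory.Limits Opposite ZeroObject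

universe v u

/-- A right triangulated category `(C, Σ, ▷)`: an additive category with an additive
shift endofunctor `Σ` and a class of right triangles `U ⟶ V ⟶ W ⟶ ΣU` satisfying
axioms (RTR0)–(RTR4). -/
structure RightTriangulated (C : Type u) [Category.{v} C] [Preadditive C]
    [HasZeroObject C] where
  /-- the shift functor `Σ` -/
  shift : C ⥤ C
  shift_additive : shift.Additive
  /-- the class of right triangles -/
  IsTri : ∀ ⦃U V W : C⦄, (U ⟶ V) → (V ⟶ W) → (W ⟶ shift.obj U) → Prop
  /-- (RTR0): right triangles are closed under isomorphism of sequences -/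
  rtr0 : ∀ ⦃U V W U' V' W' : C⦄ (u : U ⟶ V) (v : V ⟶ W) (w : W ⟶ shift.obj U)
      (u' : U' ⟶ V') (v' : V' ⟶ W') (w' : W' ⟶ shift.obj U')
      (f : U ≅ U') (g : V ≅ V') (h : W ≅ W'),
      IsTri u v w → u ≫ g.hom = f.hom ≫ u' → v ≫ h.hom = g.hom ≫ v' →
      w ≫ shift.map f.hom = h.hom ≫ w' → IsTri u' v' w'
  /-- (RTR1a): `0 ⟶ U = U ⟶ Σ0` is a right triangle -/
  rtr1_id : ∀ U : C, IsTri (0 : (0 : C) ⟶ U) (𝟙 U) 0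
  /-- (RTR1b): every morphism embeds in a right triangle -/
  rtr1_ex : ∀ ⦃U V : C⦄ (u : U ⟶ V), ∃ (W : C) (v : V ⟶ W) (w : W ⟶ shift.obj U),
      IsTri u v w
  /-- (RTR2): rotation -/
  rtr2 : ∀ ⦃U V W : C⦄ (u : U ⟶ V) (v : V ⟶ W) (w : W ⟶ shift.obj U),
      IsTri u v w → IsTri v w (-shift.map u)
  /-- (RTR3): morphisms of right triangles -/
  rtr3 : ∀ ⦃U V W U' V' W' : C⦄ (u : U ⟶ V) (v : V ⟶ W) (w : W ⟶ shift.obj U)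
      (u' : U' ⟶ V') (v' : V' ⟶ W') (w' : W' ⟶ shift.obj U')
      (f : U ⟶ U') (g : V ⟶ V'), IsTri u v w → IsTri u' v' w' →
      u ≫ g = f ≫ u' →
      ∃ h : W ⟶ W', v ≫ h = g ≫ v' ∧ w ≫ shift.map f = h ≫ w'
  /-- (RTR4): the octahedron axiom -/
  rtr4 : ∀ ⦃U V W U' W' : C⦄ (u : U ⟶ V) (v : V ⟶ W) (w : W ⟶ shift.obj U)
      (u' : U' ⟶ U) (v' : U ⟶ W') (w' : W' ⟶ shift.obj U'),
      IsTri u v w → IsTri u' v' w' →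
      ∃ (V' : C) (p : V ⟶ V') (q : V' ⟶ shift.obj U') (f : W' ⟶ V') (g : V' ⟶ W),
        IsTri (u' ≫ u) p q ∧ IsTri f g (w ≫ shift.map v') ∧
        v' ≫ f = u ≫ p ∧ p ≫ g = v ∧ f ≫ q = w'
universe v' u'

variable {C : Type u} [Category.{v} C] [Preadditive C] [HasZeroObject C]

/-- The full subcategory on a set of objects. -/
abbrev Subcat (𝓜 : Set C) := ObjectProperty.FullSubcategory (fun X : C => X ∈ 𝓜)

/-- The functor `X ↦ Hom_C(−, X)|_𝓜`, the restricted preadditive Yoneda embedding. -/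
def resYoneda (𝓜 : Set C) : C ⥤ ((Subcat 𝓜)ᵒᵖ ⥤ AddCommGrpCat.{v}) :=
  preadditiveYoneda ⋙
    (Functor.whiskeringLeft _ _ _).obj (ObjectProperty.ι (fun X : C => X ∈ 𝓜)).op

/-- A contravariant additive functor `F` (an `M`-module) is finitely presented if it is
the cokernel of a morphism between representable functors, i.e. there are `A B : M`,
`h : A ⟶ B` and `π : Hom(−,B) ⟶ F` such that
`Hom(−,A) ⟶ Hom(−,B) ⟶ F ⟶ 0` is exact. -/
def FinPres {M : Type u'} [Category.{v'} M] [Preadditive M]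
    (F : Mᵒᵖ ⥤ AddCommGrpCat.{v'}) : Prop :=
  ∃ (A B : M) (h : A ⟶ B) (π : preadditiveYoneda.obj B ⟶ F),
    (∀ m : M, Function.Surjective (π.app (op m))) ∧
    (∀ (m : M) (x : (preadditiveYoneda.obj B).obj (op m)),
      π.app (op m) x = 0 ↔ ∃ y, (preadditiveYoneda.map h).app (op m) y = x)

/-- `mod M`: the category of finitely presented contravariant additive functors
`M → Ab`. -/
abbrev ModCat (M : Type u') [Category.{v'} M] [Preadditive M] :=
  ObjectProperty.FullSubcategory (fun F : Mᵒᵖ ⥤ AddCommGrpCat.{v'} => F.Additive ∧ FinPres F)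

/-!
Surjectivity of `Hom(−, M1)|_𝓜 ⟶ Hom(−, X)|_𝓜` is (RC2). For exactness in the middle, let
`t : m ⟶ M1` with `t ≫ g = 0`: then `g` extends over the cone of `t`, and comparing the rotations
of the triangles on `t` and on `f` gives `k : Σm ⟶ ΣM0` with `Σt = k ≫ Σf`. Since `Σ` is fully
faithful on `𝓜` (RC1), `k = Σy` with `y ≫ f = t`. The presentation is then
`Hom_𝓜(−, M0) ⟶ Hom_𝓜(−, M1) ⟶ Hom(−, X)|_𝓜 ⟶ 0`.
-/

namespace RightTriangulated

variable (T : RightTriangulated C)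

lemma comp_eq_zero {U V W : C} {u : U ⟶ V} {v : V ⟶ W} {w : W ⟶ T.shift.obj U}
    (hT : T.IsTri u v w) : u ≫ v = 0 := by
  -- the rotated triangle `U ⟶ U ⟶ Σ0 ⟶ ΣU` maps to this one, so `u ≫ v` factors through `Σ0`
  obtain ⟨k, hk, -⟩ := T.rtr3 _ _ _ u v w (𝟙 U) u (T.rtr2 _ _ _ (T.rtr1_id U)) hT (by simp)
  simpa using hk.symm

lemma exists_comp_eq_of_comp_eq_zero {M0 M1 X : C} {f : M0 ⟶ M1} {g : M1 ⟶ X}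
    {h : X ⟶ T.shift.obj M0} (hT : T.IsTri f g h) {m : C}
    (hfull : Function.Surjective (T.shift.map : (m ⟶ M0) → _))
    (hfaithful : Function.Injective (T.shift.map : (m ⟶ M1) → _))
    (t : m ⟶ M1) (ht : t ≫ g = 0) : ∃ y : m ⟶ M0, y ≫ f = t := by
  obtain ⟨W, a, b, hW⟩ := T.rtr1_ex t
  obtain ⟨r, hr, -⟩ := T.rtr3 t a b (0 : (0 : C) ⟶ X) (𝟙 X) 0 0 g hW (T.rtr1_id X)
    (by simp [ht])
  obtain ⟨k, -, hk⟩ := T.rtr3 a b _ g h _ (𝟙 M1) r (T.rtr2 _ _ _ hW) (T.rtr2 _ _ _ hT)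
    (by simpa using hr)
  obtain ⟨y, rfl⟩ := hfull k
  refine ⟨y, hfaithful ?_⟩
  have hshift : T.shift.map t = T.shift.map y ≫ T.shift.map f := by simpa using hk
  rw [Functor.map_comp, hshift]

end RightTriangulated

variable {𝓜 : Set C}

def preadditiveYonedaIsoResYoneda {M : C} (hM : M ∈ 𝓜) :
    preadditiveYoneda.obj (⟨M, hM⟩ : Subcat 𝓜) ≅ (resYoneda 𝓜).obj M :=
  NatIso.ofComponents (fun m => InducedCategory.homAddEquiv.toAddCommGrpIso)

omit [HasZeroObject C] in
lemma finPres_resYoneda_of_exact {M0 M1 X : C} (hM0 : M0 ∈ 𝓜) (hM1 : M1 ∈ 𝓜)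
    (f : M0 ⟶ M1) (g : M1 ⟶ X)
    (hsurj : ∀ m : Subcat 𝓜, Function.Surjective (((resYoneda 𝓜).map g).app (op m)))
    (hexact : ∀ (m : Subcat 𝓜) (x : ((resYoneda 𝓜).obj M1).obj (op m)),
      ((resYoneda 𝓜).map g).app (op m) x = 0 ↔ ∃ y, ((resYoneda 𝓜).map f).app (op m) y = x) :
    FinPres ((resYoneda 𝓜).obj X) := by
  refine ⟨⟨M0, hM0⟩, ⟨M1, hM1⟩, ObjectProperty.homMk f,
    (preadditiveYonedaIsoResYoneda hM1).hom ≫ (resYoneda 𝓜).map g, fun m t => ?_, fun m x => ?_⟩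
  · obtain ⟨s, hs⟩ := hsurj m t
    exact ⟨ObjectProperty.homMk s, hs⟩
  · refine (hexact m x.hom).trans
      ⟨fun ⟨y, hy⟩ => ⟨ObjectProperty.homMk y, ?_⟩, fun ⟨y, hy⟩ => ⟨y.hom, ?_⟩⟩
    · exact InducedCategory.hom_ext hy
    · exact congrArg InducedCategory.Hom.hom hy

theorem stmt6_general (T : RightTriangulated C) (𝓜 : Set C)
    (RC1 : ∀ ⦃m m' : C⦄, m ∈ 𝓜 → m' ∈ 𝓜 →
      Function.Bijective (fun φ : m ⟶ m' => T.shift.map φ))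
    (RC2 : ∀ ⦃M0 M1 X : C⦄, M0 ∈ 𝓜 → M1 ∈ 𝓜 →
      ∀ (f : M0 ⟶ M1) (g : M1 ⟶ X) (h : X ⟶ T.shift.obj M0), T.IsTri f g h →
      ∀ ⦃m : C⦄, m ∈ 𝓜 → ∀ t : m ⟶ X, ∃ s : m ⟶ M1, s ≫ g = t)
    {M0 M1 X : C} (hM0 : M0 ∈ 𝓜) (hM1 : M1 ∈ 𝓜)
    (f : M0 ⟶ M1) (g : M1 ⟶ X) (h : X ⟶ T.shift.obj M0) (hT : T.IsTri f g h) :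
    (∀ m : Subcat 𝓜, Function.Surjective (((resYoneda 𝓜).map g).app (op m))) ∧
    (∀ (m : Subcat 𝓜) (x : ((resYoneda 𝓜).obj M1).obj (op m)),
      ((resYoneda 𝓜).map g).app (op m) x = 0 ↔
        ∃ y, ((resYoneda 𝓜).map f).app (op m) y = x) ∧
    FinPres ((resYoneda 𝓜).obj X) := by
  have hsurj : ∀ m : Subcat 𝓜, Function.Surjective (((resYoneda 𝓜).map g).app (op m)) :=
    fun m => RC2 hM0 hM1 f g h hT m.property
  have hexact : ∀ (m : Subcat 𝓜) (x : ((resYoneda 𝓜).obj M1).obj (op m)),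
      ((resYoneda 𝓜).map g).app (op m) x = 0 ↔
        ∃ y, ((resYoneda 𝓜).map f).app (op m) y = x := by
    intro m x
    refine ⟨T.exists_comp_eq_of_comp_eq_zero hT (RC1 m.property hM0).2
      (RC1 m.property hM1).1 x, ?_⟩
    rintro ⟨y, rfl⟩
    exact (Category.assoc y f g).trans ((y ≫= T.comp_eq_zero hT).trans comp_zero)
  exact ⟨hsurj, hexact, finPres_resYoneda_of_exact hM0 hM1 f g hsurj hexact⟩

/-- Let `C` be a right triangulated category and `𝓜` a rigid
subcategory satisfying (RC1) and (RC2).  Then for any right triangle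
`M0 ⟶f M1 ⟶g X ⟶h ΣM0` with `M0, M1 ∈ 𝓜`, the sequence
`Hom_𝓜(−,M0) ⟶ Hom_𝓜(−,M1) ⟶ Hom_C(−,X)|_𝓜 ⟶ 0` of `𝓜`-modules is exact;
in particular `Hom_C(−,X)|_𝓜` is a finitely presented `𝓜`-module. -/
theorem stmt6 (T : RightTriangulated C) (𝓜 : Set C)
    (rigid : ∀ ⦃m m' : C⦄, m ∈ 𝓜 → m' ∈ 𝓜 → ∀ φ : m ⟶ T.shift.obj m', φ = 0)
    (RC1 : ∀ ⦃m m' : C⦄, m ∈ 𝓜 → m' ∈ 𝓜 →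
      Function.Bijective (fun φ : m ⟶ m' => T.shift.map φ))
    (RC2 : ∀ ⦃M0 M1 X : C⦄, M0 ∈ 𝓜 → M1 ∈ 𝓜 →
      ∀ (f : M0 ⟶ M1) (g : M1 ⟶ X) (h : X ⟶ T.shift.obj M0), T.IsTri f g h →
      ∀ ⦃m : C⦄, m ∈ 𝓜 → ∀ t : m ⟶ X, ∃ s : m ⟶ M1, s ≫ g = t)
    {M0 M1 X : C} (hM0 : M0 ∈ 𝓜) (hM1 : M1 ∈ 𝓜)
    (f : M0 ⟶ M1) (g : M1 ⟶ X) (h : X ⟶ T.shift.obj M0) (hT : T.IsTri f g h) :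
    (∀ m : Subcat 𝓜, Function.Surjective (((resYoneda 𝓜).map g).app (op m))) ∧
    (∀ (m : Subcat 𝓜) (x : ((resYoneda 𝓜).obj M1).obj (op m)),
      ((resYoneda 𝓜).map g).app (op m) x = 0 ↔
        ∃ y, ((resYoneda 𝓜).map f).app (op m) y = x) ∧
    FinPres ((resYoneda 𝓜).obj X) :=
  stmt6_general T 𝓜 RC1 RC2 hM0 hM1 f g h hT
end

section
/- Let C be a right triangulated category with shift Σ, and M a rigid subcategory satisfying: (RC1) Σ restricted to M is fully faithful; (RC2) for any right triangle M0 → M1 →g X → ΣM0 with M0, M1 ∈ M, g is a right M-approximation of X. Then the functor X ↦ Hom_C(−, X)|_M induces an equivalence of categories (M ∗ ΣM)/ΣM ≃ mod M. -/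
open CategoryTheory CategoryTheory.Limits Opposite ZeroObject

universe v u

universe v' u' v'' u''

/-- `f` factors through an object belonging to `B`. -/
def FactorsThru {A : Type u''} [Category.{v''} A] (B : Set A) {X Y : A} (f : X ⟶ Y) : Prop :=
  ∃ (Z : A) (_ : Z ∈ B) (g : X ⟶ Z) (h : Z ⟶ Y), g ≫ h = f

variable {C : Type u} [Category.{v} C] [Preadditive C] [HasZeroObject C]

variable (T : RightTriangulated C) (𝓜 : Set C)

/-- The subcategory `𝓜 ∗ Σ𝓜` of objects `X` admitting a right triangle
`M0 ⟶ M1 ⟶ X ⟶ ΣM0` with `M0, M1 ∈ 𝓜`. -/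
def star : Set C :=
  {X | ∃ M0 M1 : C, M0 ∈ 𝓜 ∧ M1 ∈ 𝓜 ∧
    ∃ (f : M0 ⟶ M1) (g : M1 ⟶ X) (h : X ⟶ T.shift.obj M0), T.IsTri f g h}

/-- The hom relation on `𝓜 ∗ Σ𝓜` identifying morphisms whose difference factors
through an object of `Σ𝓜`; its quotient is `(𝓜 ∗ Σ𝓜)/Σ𝓜`. -/
def starRel : HomRel (Subcat (star T 𝓜)) :=
  fun {X Y} (f g : X ⟶ Y) =>
    FactorsThru (T.shift.obj '' 𝓜) (X := X.obj) (Y := Y.obj) (f - g).hom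

/-!
Fix a right triangle `M₀ ⟶ M₁ ⟶ X ⟶ ΣM₀` with maps `f`, `g`, `k` and `Mᵢ ∈ 𝓜`. By (RC2)
and (RC1) the sequence `Hom(−, M₀) ⟶ Hom(−, M₁) ⟶ Hom(−, X)|_𝓜 ⟶ 0` is exact, so
`Hom(−, X)|_𝓜` is finitely presented; conversely the cone of any `h : A ⟶ B` in `𝓜` realises
the module presented by `h`, which gives essential surjectivity. A transformation
`Hom(−, X)|_𝓜 ⟶ Hom(−, Y)|_𝓜` is determined by the image `b` of `g`, and `f ≫ b = 0` lets `b`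
factor through `g`: the functor is full. Its kernel consists of the maps `d` killed by every
`m ⟶ X` with `m ∈ 𝓜`; for those, `g ≫ d = 0` makes `d` factor through `ΣM₀` by the rotated
triangle, while rigidity makes every map through `Σ𝓜` such a `d`. So the kernel is exactly the
ideal defining `(𝓜 ∗ Σ𝓜)/Σ𝓜`.
-/

theorem AddCommGrpCat.exists_iso_comp_eq_of_surjective {P F G : AddCommGrpCat}
    (π : P ⟶ F) (π' : P ⟶ G) (hπ : Function.Surjective π) (hπ' : Function.Surjective π')
    (hker : ∀ x, π x = 0 ↔ π' x = 0) : ∃ e : F ≅ G, π ≫ e.hom = π' := by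
  let ρ := π.hom.liftOfSurjective hπ ⟨π'.hom, fun x hx => (hker x).1 hx⟩
  have hρ : ∀ x, ρ (π x) = π' x := π.hom.liftOfRightInverse_comp_apply _ _ _
  have hbij : Function.Bijective ρ := by
    refine ⟨(injective_iff_map_eq_zero ρ).2 fun y hy => ?_, fun z => ?_⟩
    · obtain ⟨x, rfl⟩ := hπ y
      exact (hker x).2 ((hρ x).symm.trans hy)
    · obtain ⟨x, rfl⟩ := hπ' z
      exact ⟨π x, hρ x⟩
  exact ⟨(AddEquiv.ofBijective ρ hbij).toAddCommGrpIso, by ext x; exact hρ x⟩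

theorem exists_natIso_comp_eq_of_surjective {J : Type*} [Category J]
    {P F G : J ⥤ AddCommGrpCat} (π : P ⟶ F) (π' : P ⟶ G)
    (hπ : ∀ j, Function.Surjective (π.app j)) (hπ' : ∀ j, Function.Surjective (π'.app j))
    (hker : ∀ j x, π.app j x = 0 ↔ π'.app j x = 0) : ∃ e : F ≅ G, π ≫ e.hom = π' := by
  choose e he using fun j =>
    AddCommGrpCat.exists_iso_comp_eq_of_surjective _ _ (hπ j) (hπ' j) (hker j)
  have : ∀ j, Epi (π.app j) := fun j => (AddCommGrpCat.epi_iff_surjective _).2 (hπ j)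
  refine ⟨NatIso.ofComponents e fun {j j'} φ => ?_, by ext1; exact funext he⟩
  rw [← cancel_epi (π.app j), ← NatTrans.naturality_assoc, he, ← Category.assoc, he,
    π'.naturality]

section Preadditive

variable {C : Type*} [Category C] [Preadditive C] {𝓜 : Set C}

variable (𝓜) in
def IsRightApproximation {B X : C} (g : B ⟶ X) : Prop :=
  ∀ ⦃m : C⦄, m ∈ 𝓜 → ∀ t : m ⟶ X, ∃ s : m ⟶ B, s ≫ g = t

instance resYoneda_obj_additive (X : C) : ((resYoneda 𝓜).obj X).Additive :=
  inferInstanceAs ((ObjectProperty.ι _).op ⋙ preadditiveYoneda.obj X).Additive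

lemma resYoneda_naturality {X Y : C} (η : (resYoneda 𝓜).obj X ⟶ (resYoneda 𝓜).obj Y)
    {m m' : Subcat 𝓜} (s : m.obj ⟶ m'.obj) (x : m'.obj ⟶ X) :
    η.app (op m) (s ≫ x) = s ≫ (η.app (op m') x : m'.obj ⟶ Y) :=
  ConcreteCategory.congr_hom (η.naturality (ObjectProperty.homMk s).op) x

lemma resYoneda_map_eq_iff {X Y : C} (t t' : X ⟶ Y) :
    (resYoneda 𝓜).map t = (resYoneda 𝓜).map t' ↔
      ∀ m ∈ 𝓜, ∀ s : m ⟶ X, s ≫ t = s ≫ t' := by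
  refine ⟨fun h m hm s => ConcreteCategory.congr_hom (NatTrans.congr_app h (op ⟨m, hm⟩)) s,
    fun h => ?_⟩
  ext m s
  exact h _ m.unop.2 s

lemma IsRightApproximation.resYoneda_map_eq {B X Y : C} {g : B ⟶ X}
    (hg : IsRightApproximation 𝓜 g) (hB : B ∈ 𝓜)
    (η : (resYoneda 𝓜).obj X ⟶ (resYoneda 𝓜).obj Y) (t : X ⟶ Y)
    (ht : g ≫ t = η.app (op ⟨B, hB⟩) g) : (resYoneda 𝓜).map t = η := by
  ext m s
  obtain ⟨s', rfl⟩ := hg m.unop.2 s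
  exact (Category.assoc _ _ _).trans ((congrArg _ ht).trans
    (resYoneda_naturality (m := m.unop) (m' := ⟨B, hB⟩) η s' g).symm)

def yonedaComp {B : Subcat 𝓜} {X : C} (g : B.obj ⟶ X) :
    preadditiveYoneda.obj B ⟶ (resYoneda 𝓜).obj X where
  app m := AddCommGrpCat.ofHom <| AddMonoidHom.mk' (fun s => (s.hom ≫ g : m.unop.obj ⟶ X))
    fun _ _ => Preadditive.add_comp _ _ _ _ _ g
  naturality _ _ _ := by
    ext
    exact Category.assoc _ _ _

lemma yonedaComp_app_surjective {B : Subcat 𝓜} {X : C} {g : B.obj ⟶ X}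
    (hg : IsRightApproximation 𝓜 g) (m : (Subcat 𝓜)ᵒᵖ) :
    Function.Surjective ((yonedaComp g).app m) := fun t =>
  let ⟨s, hs⟩ := hg m.unop.2 t
  ⟨ObjectProperty.homMk s, hs⟩

end Preadditive

namespace RightTriangulated

namespace IsTri

variable {T} {U V W : C} {u : U ⟶ V} {v : V ⟶ W} {w : W ⟶ T.shift.obj U}

lemma comp_eq_zero (hT : T.IsTri u v w) : u ≫ v = 0 := by
  obtain ⟨h, hv, -⟩ := T.rtr3 (𝟙 U) (0 : U ⟶ T.shift.obj 0) _ u v w (𝟙 U) u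
    (T.rtr2 _ _ _ (T.rtr1_id U)) hT (by simp)
  simpa using hv.symm

lemma exists_comp_eq (hT : T.IsTri u v w) {Y : C} (t : V ⟶ Y) (ht : u ≫ t = 0) :
    ∃ s : W ⟶ Y, v ≫ s = t := by
  obtain ⟨s, hs, -⟩ :=
    T.rtr3 u v w (0 : (0 : C) ⟶ Y) (𝟙 Y) 0 0 t hT (T.rtr1_id Y) (by simp [ht])
  exact ⟨s, by simpa using hs⟩

/-- Rotate this triangle and one on `x`, compare them, and pull the comparison map
`Σm ⟶ ΣU` back along `Σ`. -/
lemma exists_comp_eq_of_comp_eq_zero (hT : T.IsTri u v w) {m : C}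
    (hsurj : Function.Surjective (fun φ : m ⟶ U => T.shift.map φ))
    (hinj : Function.Injective (fun φ : m ⟶ V => T.shift.map φ))
    (x : m ⟶ V) (hx : x ≫ v = 0) : ∃ y : m ⟶ U, y ≫ u = x := by
  obtain ⟨N, p, q, hx'⟩ := T.rtr1_ex x
  obtain ⟨r, hr⟩ := hx'.exists_comp_eq v hx
  obtain ⟨t, -, ht⟩ := T.rtr3 p q (-T.shift.map x) v w (-T.shift.map u) (𝟙 V) r
    (T.rtr2 _ _ _ hx') (T.rtr2 _ _ _ hT) (by rw [hr, Category.id_comp])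
  obtain ⟨y, rfl⟩ := hsurj t
  refine ⟨y, hinj ?_⟩
  simpa using ht.symm

end IsTri

def IsRigid : Prop :=
  ∀ ⦃m m' : C⦄, m ∈ 𝓜 → m' ∈ 𝓜 → ∀ φ : m ⟶ T.shift.obj m', φ = 0

/-- Condition (RC1). -/
def ShiftFullyFaithfulOn : Prop :=
  ∀ ⦃m m' : C⦄, m ∈ 𝓜 → m' ∈ 𝓜 → Function.Bijective (fun φ : m ⟶ m' => T.shift.map φ)

/-- Condition (RC2). -/
def TrianglesApproximate : Prop :=
  ∀ ⦃M0 M1 X : C⦄, M0 ∈ 𝓜 → M1 ∈ 𝓜 →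
    ∀ (f : M0 ⟶ M1) (g : M1 ⟶ X) (h : X ⟶ T.shift.obj M0), T.IsTri f g h →
      IsRightApproximation 𝓜 g

end RightTriangulated

variable {T 𝓜}

lemma yonedaComp_app_eq_zero_iff (hRC1 : T.ShiftFullyFaithfulOn 𝓜) {A B : Subcat 𝓜}
    (h : A ⟶ B) {X : C} {g : B.obj ⟶ X} {k : X ⟶ T.shift.obj A.obj} (hT : T.IsTri h.hom g k)
    (m : (Subcat 𝓜)ᵒᵖ) (x : m.unop ⟶ B) :
    (yonedaComp g).app m x = 0 ↔ ∃ y, (preadditiveYoneda.map h).app m y = x := by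
  refine ⟨fun hx => ?_, ?_⟩
  · obtain ⟨y, hy⟩ := hT.exists_comp_eq_of_comp_eq_zero (hRC1 m.unop.2 A.2).2
      (hRC1 m.unop.2 B.2).1 x.hom hx
    exact ⟨ObjectProperty.homMk y, (InducedCategory.hom_ext hy : ObjectProperty.homMk y ≫ h = x)⟩
  · rintro ⟨y, rfl⟩
    exact (Category.assoc _ _ _).trans ((congrArg _ hT.comp_eq_zero).trans Limits.comp_zero)

lemma finPres_resYoneda (hRC1 : T.ShiftFullyFaithfulOn 𝓜) (hRC2 : T.TrianglesApproximate 𝓜)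
    {X : C} (hX : X ∈ star T 𝓜) : FinPres ((resYoneda 𝓜).obj X) := by
  obtain ⟨M0, M1, hM0, hM1, f, g, k, hT⟩ := hX
  let f' : (⟨M0, hM0⟩ : Subcat 𝓜) ⟶ ⟨M1, hM1⟩ := ObjectProperty.homMk f
  exact ⟨_, _, f', yonedaComp g,
    fun m => yonedaComp_app_surjective (hRC2 hM0 hM1 f g k hT) (op m),
    fun m => yonedaComp_app_eq_zero_iff hRC1 f' hT (op m)⟩

lemma factorsThru_shift_iff (hrigid : T.IsRigid 𝓜) {X Y : C} (hX : X ∈ star T 𝓜) (d : X ⟶ Y) :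
    FactorsThru (T.shift.obj '' 𝓜) d ↔ ∀ m ∈ 𝓜, ∀ s : m ⟶ X, s ≫ d = 0 := by
  refine ⟨?_, fun hd => ?_⟩
  · rintro ⟨_, ⟨n, hn, rfl⟩, a, b, rfl⟩ m hm s
    rw [← Category.assoc, hrigid hm hn (s ≫ a), Limits.zero_comp]
  · obtain ⟨M0, M1, hM0, hM1, f, g, k, hT⟩ := hX
    obtain ⟨e, he⟩ := (T.rtr2 _ _ _ hT).exists_comp_eq d (hd M1 hM1 g)
    exact ⟨_, ⟨M0, hM0, rfl⟩, k, e, he⟩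

lemma resYoneda_map_surjective (hRC2 : T.TrianglesApproximate 𝓜) {X Y : C}
    (hX : X ∈ star T 𝓜) (η : (resYoneda 𝓜).obj X ⟶ (resYoneda 𝓜).obj Y) :
    ∃ t : X ⟶ Y, (resYoneda 𝓜).map t = η := by
  obtain ⟨M0, M1, hM0, hM1, f, g, k, hT⟩ := hX
  have hf : f ≫ (η.app (op ⟨M1, hM1⟩) g : M1 ⟶ Y) = 0 :=
    (resYoneda_naturality (m := ⟨M0, hM0⟩) (m' := ⟨M1, hM1⟩) η f g).symm.trans
      ((congrArg _ hT.comp_eq_zero).trans (map_zero _))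
  obtain ⟨t, ht⟩ := hT.exists_comp_eq _ hf
  exact ⟨t, (hRC2 hM0 hM1 f g k hT).resYoneda_map_eq hM1 η t ht⟩

variable (T 𝓜) in
def resYonedaMod (hRC1 : T.ShiftFullyFaithfulOn 𝓜) (hRC2 : T.TrianglesApproximate 𝓜) :
    Subcat (star T 𝓜) ⥤ ModCat (Subcat 𝓜) :=
  ObjectProperty.lift _ (ObjectProperty.ι _ ⋙ resYoneda 𝓜) fun X =>
    ⟨resYoneda_obj_additive X.obj, finPres_resYoneda hRC1 hRC2 X.2⟩

lemma starRel_eq_homRel (hrigid : T.IsRigid 𝓜) (hRC1 : T.ShiftFullyFaithfulOn 𝓜)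
    (hRC2 : T.TrianglesApproximate 𝓜) : starRel T 𝓜 = (resYonedaMod T 𝓜 hRC1 hRC2).homRel := by
  funext X Y t t'
  refine propext ((factorsThru_shift_iff hrigid X.2 _).trans ?_)
  rw [Functor.homRel_iff, ← (ObjectProperty.ι _).map_injective.eq_iff]
  change _ ↔ (resYoneda 𝓜).map t.hom = (resYoneda 𝓜).map t'.hom
  simp only [resYoneda_map_eq_iff, ← sub_eq_zero (a := _ ≫ t.hom), ← Preadditive.comp_sub]
  rfl

instance resYonedaMod_full (hRC1 : T.ShiftFullyFaithfulOn 𝓜)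
    (hRC2 : T.TrianglesApproximate 𝓜) : (resYonedaMod T 𝓜 hRC1 hRC2).Full where
  map_surjective {X _} η :=
    let ⟨t, ht⟩ := resYoneda_map_surjective hRC2 X.2 η.hom
    ⟨ObjectProperty.homMk t, InducedCategory.hom_ext ht⟩

instance resYonedaMod_essSurj (hRC1 : T.ShiftFullyFaithfulOn 𝓜)
    (hRC2 : T.TrianglesApproximate 𝓜) : (resYonedaMod T 𝓜 hRC1 hRC2).EssSurj where
  mem_essImage F := by
    obtain ⟨-, A, B, h, π, hπ, hker⟩ := F.2
    obtain ⟨X, g, k, hT⟩ := T.rtr1_ex h.hom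
    obtain ⟨e, -⟩ := exists_natIso_comp_eq_of_surjective π (yonedaComp g) (fun m => hπ m.unop)
      (yonedaComp_app_surjective (hRC2 A.2 B.2 _ g k hT)) fun m x =>
        (hker m.unop x).trans (yonedaComp_app_eq_zero_iff hRC1 h hT m x).symm
    exact ⟨⟨X, _, _, A.2, B.2, _, g, k, hT⟩, ⟨ObjectProperty.isoMk _ e.symm⟩⟩

/-- Let `C` be a right triangulated category and `𝓜` a rigid
subcategory satisfying (RC1) and (RC2).  Then `X ↦ Hom_C(−,X)|_𝓜` induces an
equivalence `(𝓜 ∗ Σ𝓜)/Σ𝓜 ≌ mod 𝓜`. -/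
theorem stmt7
    (rigid : ∀ ⦃m m' : C⦄, m ∈ 𝓜 → m' ∈ 𝓜 → ∀ φ : m ⟶ T.shift.obj m', φ = 0)
    (RC1 : ∀ ⦃m m' : C⦄, m ∈ 𝓜 → m' ∈ 𝓜 →
      Function.Bijective (fun φ : m ⟶ m' => T.shift.map φ))
    (RC2 : ∀ ⦃M0 M1 X : C⦄, M0 ∈ 𝓜 → M1 ∈ 𝓜 →
      ∀ (f : M0 ⟶ M1) (g : M1 ⟶ X) (h : X ⟶ T.shift.obj M0), T.IsTri f g h →
      ∀ ⦃m : C⦄, m ∈ 𝓜 → ∀ t : m ⟶ X, ∃ s : m ⟶ M1, s ≫ g = t) :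
    ∃ E : CategoryTheory.Quotient (starRel T 𝓜) ⥤ ModCat (Subcat 𝓜),
      E.IsEquivalence ∧
      Nonempty (Quotient.functor (starRel T 𝓜) ⋙ E ⋙ ObjectProperty.ι _ ≅
        ObjectProperty.ι _ ⋙ resYoneda 𝓜) := by
  have hRC1 : T.ShiftFullyFaithfulOn 𝓜 := RC1
  have hRC2 : T.TrianglesApproximate 𝓜 := RC2
  rw [starRel_eq_homRel rigid hRC1 hRC2]
  exact ⟨CategoryTheory.Quotient.lift _ (resYonedaMod T 𝓜 hRC1 hRC2) fun _ _ _ _ => id,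
    inferInstance, ⟨(Functor.associator _ _ _).symm ≪≫
      Functor.isoWhiskerRight (Quotient.lift.isLift _ _ _) _ ≪≫ ObjectProperty.liftCompιIso _ _ _⟩⟩
end

section
/- Let B be an exact category with enough injectives and M a rigid full subcategory containing all injectives. Then the cosyzygy functor Σ restricted to the image M̄ of M in the stable category B̄ = B/I is fully faithful. -/
open CategoryTheory CategoryTheory.Limits Opposite ZeroObject

universe v u v' u' v'' u''

/-- A Quillen exact structure on an additive category `B`: a class of conflations
(kernel–cokernel pairs) `X ⟶i Y ⟶p Z`, written `0 → X → Y → Z → 0`, satisfying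
the axioms of an exact category. -/
structure ExactStructure (B : Type u) [Category.{v} B] [Preadditive B]
    [HasZeroObject B] where
  /-- the class of conflations -/
  IsConf : ∀ ⦃X Y Z : B⦄, (X ⟶ Y) → (Y ⟶ Z) → Prop
  comp_zero : ∀ ⦃X Y Z : B⦄ (i : X ⟶ Y) (p : Y ⟶ Z), IsConf i p → i ≫ p = 0
  /-- in a conflation, `i` is a kernel of `p` -/
  isKernel : ∀ ⦃X Y Z : B⦄ (i : X ⟶ Y) (p : Y ⟶ Z) (h : IsConf i p),
    Nonempty (IsLimit (KernelFork.ofι i (comp_zero i p h)))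
  /-- in a conflation, `p` is a cokernel of `i` -/
  isCokernel : ∀ ⦃X Y Z : B⦄ (i : X ⟶ Y) (p : Y ⟶ Z) (h : IsConf i p),
    Nonempty (IsColimit (CokernelCofork.ofπ p (comp_zero i p h)))
  /-- conflations are closed under isomorphism -/
  iso_closed : ∀ ⦃X Y Z X' Y' Z' : B⦄ (i : X ⟶ Y) (p : Y ⟶ Z)
    (i' : X' ⟶ Y') (p' : Y' ⟶ Z') (eX : X ≅ X') (eY : Y ≅ Y') (eZ : Z ≅ Z'),
    IsConf i p → i ≫ eY.hom = eX.hom ≫ i' → p ≫ eZ.hom = eY.hom ≫ p' → IsConf i' p'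
  /-- `0 → X → X → 0 → 0` is a conflation -/
  id_conf : ∀ X : B, IsConf (𝟙 X) (0 : X ⟶ 0)
  /-- `0 → 0 → X → X → 0` is a conflation -/
  id_conf' : ∀ X : B, IsConf (0 : (0 : B) ⟶ X) (𝟙 X)
  /-- inflations are closed under composition -/
  infl_comp : ∀ ⦃X Y W : B⦄ (i : X ⟶ Y) (i' : Y ⟶ W),
    (∃ (Z : B) (p : Y ⟶ Z), IsConf i p) → (∃ (Z : B) (p : W ⟶ Z), IsConf i' p) →
    ∃ (Z : B) (p : W ⟶ Z), IsConf (i ≫ i') p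
  /-- deflations are closed under composition -/
  defl_comp : ∀ ⦃X Y W : B⦄ (p : X ⟶ Y) (p' : Y ⟶ W),
    (∃ (Z : B) (i : Z ⟶ X), IsConf i p) → (∃ (Z : B) (i : Z ⟶ Y), IsConf i p') →
    ∃ (Z : B) (i : Z ⟶ X), IsConf i (p ≫ p')
  /-- pushouts of inflations along arbitrary morphisms exist and are inflations -/
  pushout_infl : ∀ ⦃X Y T : B⦄ (i : X ⟶ Y) (f : X ⟶ T),
    (∃ (Z : B) (p : Y ⟶ Z), IsConf i p) →
    ∃ (P : B) (inl : Y ⟶ P) (inr : T ⟶ P),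
      IsPushout i f inl inr ∧ ∃ (Z : B) (p : P ⟶ Z), IsConf inr p
  /-- pullbacks of deflations along arbitrary morphisms exist and are deflations -/
  pullback_defl : ∀ ⦃Y Z T : B⦄ (p : Y ⟶ Z) (f : T ⟶ Z),
    (∃ (X : B) (i : X ⟶ Y), IsConf i p) →
    ∃ (P : B) (fst : P ⟶ Y) (snd : P ⟶ T),
      IsPullback fst snd p f ∧ ∃ (X : B) (i : X ⟶ P), IsConf i snd

namespace ExactStructure

variable {B : Type u} [Category.{v} B] [Preadditive B] [HasZeroObject B]
variable (E : ExactStructure B)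

/-- an inflation (admissible monomorphism) -/
def Infl ⦃X Y : B⦄ (i : X ⟶ Y) : Prop := ∃ (Z : B) (p : Y ⟶ Z), E.IsConf i p

/-- an object is injective if every morphism out of the source of an inflation
extends along it -/
def Inj (I : B) : Prop :=
  ∀ ⦃X Y : B⦄ (i : X ⟶ Y), E.Infl i → ∀ f : X ⟶ I, ∃ g : Y ⟶ I, i ≫ g = f

/-- an object is projective if every morphism into the target of a deflation
lifts along it -/
def Proj (P : B) : Prop :=
  ∀ ⦃Y Z : B⦄ (p : Y ⟶ Z), (∃ (X : B) (i : X ⟶ Y), E.IsConf i p) →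
    ∀ f : P ⟶ Z, ∃ g : P ⟶ Y, g ≫ p = f

/-- `B` has enough injectives -/
def EnoughInj : Prop :=
  ∀ X : B, ∃ (I SX : B) (i : X ⟶ I) (p : I ⟶ SX), E.Inj I ∧ E.IsConf i p

/-- `B` has enough projectives -/
def EnoughProj : Prop :=
  ∀ X : B, ∃ (P OX : B) (i : OX ⟶ P) (p : P ⟶ X), E.Proj P ∧ E.IsConf i p

/-- the hom relation defining the stable category `B/I` modulo injectives -/
def injRel : HomRel B :=
  fun {X Y} (f g : X ⟶ Y) => FactorsThru {I : B | E.Inj I} (f - g)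

/-- the hom relation defining the stable category `B/P` modulo projectives -/
def projRel : HomRel B :=
  fun {X Y} (f g : X ⟶ Y) => FactorsThru {P : B | E.Proj P} (f - g)

end ExactStructure

open ExactStructure

variable {B : Type u} [Category.{v} B] [Preadditive B] [HasZeroObject B]


private lemma approx_lift (E : ExactStructure B) (𝓜 : Set B)
    (rigid : ∀ ⦃M M' : B⦄, M ∈ 𝓜 → M' ∈ 𝓜 →
      ∀ ⦃Y : B⦄ (i : M' ⟶ Y) (p : Y ⟶ M), E.IsConf i p → ∃ r : Y ⟶ M', i ≫ r = 𝟙 M')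
    {M' I' S' N : B} (hM' : M' ∈ 𝓜) (hN : N ∈ 𝓜)
    (i' : M' ⟶ I') (p' : I' ⟶ S') (hc' : E.IsConf i' p') (φ : N ⟶ S') :
    ∃ φ' : N ⟶ I', φ' ≫ p' = φ := by
  obtain ⟨P, fst, snd, hpb, X, i₀, hconf⟩ := E.pullback_defl p' φ ⟨M', i', hc'⟩
  have hk' : IsLimit (KernelFork.ofι i' (E.comp_zero i' p' hc')) := (E.isKernel i' p' hc').some
  have hk₀ : IsLimit (KernelFork.ofι i₀ (E.comp_zero i₀ snd hconf)) := (E.isKernel i₀ snd hconf).some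
  have mono_i' : Mono i' := mono_of_isLimit_fork hk'
  have mono_i₀ : Mono i₀ := mono_of_isLimit_fork hk₀
  have hw : fst ≫ p' = snd ≫ φ := hpb.w
  -- the kernel of `snd` is isomorphic to `M'`
  obtain ⟨k, hkk⟩ := KernelFork.IsLimit.lift' hk' (i₀ ≫ fst) (by
    rw [Category.assoc, hw, ← Category.assoc, E.comp_zero i₀ snd hconf, zero_comp])
  have hkk : k ≫ i' = i₀ ≫ fst := hkk
  set l : M' ⟶ P := hpb.lift i' 0 (by simp [E.comp_zero i' p' hc'])
  obtain ⟨k', hk'i⟩ := KernelFork.IsLimit.lift' hk₀ l (by simp [l])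
  have hk'i : k' ≫ i₀ = l := hk'i
  have hkl : k ≫ l = i₀ := by
    apply hpb.hom_ext
    · simp [l, ← hkk]
    · simp [l, E.comp_zero i₀ snd hconf]
  have h1 : k' ≫ k = 𝟙 M' := by
    have : (k' ≫ k) ≫ i' = 𝟙 M' ≫ i' := by
      rw [Category.assoc, hkk, ← Category.assoc, hk'i, Category.id_comp]
      simp [l]
    exact mono_i'.right_cancellation _ _ this
  have h2 : k ≫ k' = 𝟙 X := by
    have : (k ≫ k') ≫ i₀ = 𝟙 X ≫ i₀ := by
      rw [Category.assoc, hk'i, hkl, Category.id_comp]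
    exact mono_i₀.right_cancellation _ _ this
  -- transport the conflation along the iso
  have hconf' : E.IsConf (k' ≫ i₀) snd := by
    refine E.iso_closed i₀ snd (k' ≫ i₀) snd ⟨k, k', h2, h1⟩ (Iso.refl P) (Iso.refl N) hconf ?_ ?_
    · rw [Iso.refl_hom, Category.comp_id, ← Category.assoc, h2, Category.id_comp]
    · simp
  -- rigidity gives a retraction
  obtain ⟨r, hr⟩ := rigid hN hM' (k' ≫ i₀) snd hconf'
  have hck : IsColimit (CokernelCofork.ofπ snd (E.comp_zero _ snd hconf')) :=
    (E.isCokernel _ snd hconf').some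
  have epi_snd : Epi snd := epi_of_isColimit_cofork hck
  obtain ⟨d, hd⟩ := CokernelCofork.IsColimit.desc' hck (𝟙 P - r ≫ (k' ≫ i₀)) (by
    simp only [Preadditive.comp_sub, Category.comp_id]
    rw [show (k' ≫ i₀) ≫ r ≫ k' ≫ i₀ = ((k' ≫ i₀) ≫ r) ≫ (k' ≫ i₀) by simp, hr,
      Category.id_comp, sub_self])
  have hd : snd ≫ d = 𝟙 P - r ≫ (k' ≫ i₀) := hd
  have hds : d ≫ snd = 𝟙 N := by
    apply epi_snd.left_cancellation
    rw [← Category.assoc, hd, Category.comp_id, Preadditive.sub_comp, Category.id_comp,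
      Category.assoc, E.comp_zero _ snd hconf']
    simp
  refine ⟨d ≫ fst, ?_⟩
  rw [Category.assoc, hw, ← Category.assoc, hds, Category.id_comp]

/-- Let `B` be an exact category with enough injectives and `𝓜` a
rigid full subcategory containing all injectives.  Then the cosyzygy functor `Σ`,
restricted to the image of `𝓜` in the stable category `B/I`, is fully faithful:
given conflations `0 → M → I → S → 0` and `0 → M' → I' → S' → 0` with `I, I'`
injective and `M, M' ∈ 𝓜`, every morphism `S ⟶ S'` is induced by a morphism
`M ⟶ M'` (fullness), and if a morphism on cosyzygies induced by `f : M ⟶ M'`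
factors through an injective, then so does `f` (faithfulness). -/
theorem stmt11 (E : ExactStructure B) (hE : E.EnoughInj) (𝓜 : Set B)
    (rigid : ∀ ⦃M M' : B⦄, M ∈ 𝓜 → M' ∈ 𝓜 →
      ∀ ⦃Y : B⦄ (i : M' ⟶ Y) (p : Y ⟶ M), E.IsConf i p → ∃ r : Y ⟶ M', i ≫ r = 𝟙 M')
    (hinj : ∀ I : B, E.Inj I → I ∈ 𝓜)
    ⦃M M' I I' S S' : B⦄ (hM : M ∈ 𝓜) (hM' : M' ∈ 𝓜) (hI : E.Inj I) (hI' : E.Inj I')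
    (i : M ⟶ I) (p : I ⟶ S) (i' : M' ⟶ I') (p' : I' ⟶ S')
    (hc : E.IsConf i p) (hc' : E.IsConf i' p') :
    (∀ α : S ⟶ S', ∃ (m : M ⟶ M') (j : I ⟶ I'), i ≫ j = m ≫ i' ∧ j ≫ p' = p ≫ α) ∧
    (∀ (f : M ⟶ M') (j : I ⟶ I') (s : S ⟶ S'), i ≫ j = f ≫ i' → j ≫ p' = p ≫ s →
      FactorsThru {J : B | E.Inj J} s → FactorsThru {J : B | E.Inj J} f) := by
  constructor
  · intro α
    obtain ⟨j, hj⟩ := approx_lift E 𝓜 rigid hM' (hinj I hI) i' p' hc' (p ≫ α)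
    have hk' : IsLimit (KernelFork.ofι i' (E.comp_zero i' p' hc')) := (E.isKernel i' p' hc').some
    obtain ⟨m, hm⟩ := KernelFork.IsLimit.lift' hk' (i ≫ j) (by
      rw [Category.assoc, hj, ← Category.assoc, E.comp_zero i p hc, zero_comp])
    exact ⟨m, j, hm.symm, hj⟩
  · intro f j s hij hjp ⟨J, hJ, g, h, hgh⟩
    obtain ⟨h', hh'⟩ := approx_lift E 𝓜 rigid hM' (hinj J hJ) i' p' hc' h
    have hk' : IsLimit (KernelFork.ofι i' (E.comp_zero i' p' hc')) := (E.isKernel i' p' hc').some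
    have mono_i' : Mono i' := mono_of_isLimit_fork hk'
    obtain ⟨u, hu⟩ := KernelFork.IsLimit.lift' hk' (j - p ≫ g ≫ h') (by
      simp only [Fork.ι_ofι, Preadditive.sub_comp, hjp, Category.assoc, hh', hgh, sub_self])
    have hu : u ≫ i' = j - p ≫ g ≫ h' := hu
    have hf : f = i ≫ u := by
      apply mono_i'.right_cancellation
      rw [← hij, Category.assoc, hu, Preadditive.comp_sub]
      rw [← Category.assoc, E.comp_zero i p hc, zero_comp, sub_zero]
    exact ⟨I, hI, i, u, hf.symm⟩
end

section
/- Let (C, Ω, ◁) be a left triangulated category and M a rigid subcategory (Hom_C(ΩM, M') = 0 for all M, M' ∈ M) such that Ω restricted to M is fully faithful. Then for any left triangle ΩM1 →f X →g M0 →h M1 with M0, M1 ∈ M, the sequence Hom_M(−, M0) →Hom(−,h) Hom_M(−, M1) → H(X) → 0 is exact in Mod M, where H(X) = Hom_C(Ω(−), X)|_M. In particular H(X) is a finitely presented M-module. -/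
open CategoryTheory CategoryTheory.Limits Opposite ZeroObject

universe v u

/-- A left triangulated category `(C, Ω, ◁)`: an additive category with an additive
loop endofunctor `Ω` and a class of left triangles `ΩZ ⟶ X ⟶ Y ⟶ Z` satisfying the
axioms (LTR0)–(LTR4), dual to the right triangulated axioms. -/
structure LeftTriangulated (C : Type u) [Category.{v} C] [Preadditive C]
    [HasZeroObject C] where
  /-- the loop (shift) functor `Ω` -/
  loop : C ⥤ C
  loop_additive : loop.Additive
  /-- the class of left triangles -/
  IsTri : ∀ ⦃X Y Z : C⦄, (loop.obj Z ⟶ X) → (X ⟶ Y) → (Y ⟶ Z) → Prop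
  /-- (LTR0): left triangles are closed under isomorphism of sequences -/
  ltr0 : ∀ ⦃X Y Z X' Y' Z' : C⦄ (x : loop.obj Z ⟶ X) (y : X ⟶ Y) (z : Y ⟶ Z)
      (x' : loop.obj Z' ⟶ X') (y' : X' ⟶ Y') (z' : Y' ⟶ Z')
      (f : X ≅ X') (g : Y ≅ Y') (h : Z ≅ Z'),
      IsTri x y z → x ≫ f.hom = loop.map h.hom ≫ x' → y ≫ g.hom = f.hom ≫ y' →
      z ≫ h.hom = g.hom ≫ z' → IsTri x' y' z'
  /-- (LTR1a): `Ω0 ⟶ X = X ⟶ 0` is a left triangle -/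
  ltr1_id : ∀ X : C, IsTri (0 : loop.obj (0 : C) ⟶ X) (𝟙 X) 0
  /-- (LTR1b): every morphism embeds in a left triangle -/
  ltr1_ex : ∀ ⦃Y Z : C⦄ (z : Y ⟶ Z), ∃ (X : C) (x : loop.obj Z ⟶ X) (y : X ⟶ Y),
      IsTri x y z
  /-- (LTR2): rotation -/
  ltr2 : ∀ ⦃X Y Z : C⦄ (x : loop.obj Z ⟶ X) (y : X ⟶ Y) (z : Y ⟶ Z),
      IsTri x y z → IsTri (-loop.map z) x y
  /-- (LTR3): morphisms of left triangles -/
  ltr3 : ∀ ⦃X Y Z X' Y' Z' : C⦄ (x : loop.obj Z ⟶ X) (y : X ⟶ Y) (z : Y ⟶ Z)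
      (x' : loop.obj Z' ⟶ X') (y' : X' ⟶ Y') (z' : Y' ⟶ Z')
      (g : Y ⟶ Y') (h : Z ⟶ Z'), IsTri x y z → IsTri x' y' z' →
      z ≫ h = g ≫ z' →
      ∃ f : X ⟶ X', x ≫ f = loop.map h ≫ x' ∧ y ≫ g = f ≫ y'
  /-- (LTR4): the octahedron axiom -/
  ltr4 : ∀ ⦃X Y Z Y'' Z' : C⦄ (x : loop.obj Z ⟶ X) (y : X ⟶ Y) (z : Y ⟶ Z)
      (x' : loop.obj Z' ⟶ Y'') (y' : Y'' ⟶ Z) (z' : Z ⟶ Z'),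
      IsTri x y z → IsTri x' y' z' →
      ∃ (X' : C) (u : loop.obj Z' ⟶ X') (v : X' ⟶ Y) (g : X ⟶ X') (h : X' ⟶ Y''),
        IsTri u v (z ≫ z') ∧ IsTri (loop.map y' ≫ x) g h ∧
        g ≫ v = y ∧ u ≫ h = x' ∧ h ≫ y' = v ≫ z
universe v' u' v'' u''

variable {C : Type u} [Category.{v} C] [Preadditive C] [HasZeroObject C]

/-- The functor `X ↦ Hom_C(Ω(−), X)|_𝓜`. -/
def loopResYoneda (T : LeftTriangulated C) (𝓜 : Set C) :
    C ⥤ ((Subcat 𝓜)ᵒᵖ ⥤ AddCommGrpCat.{v}) :=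
  preadditiveYoneda ⋙
    (Functor.whiskeringLeft _ _ _).obj (ObjectProperty.ι (fun X : C => X ∈ 𝓜) ⋙ T.loop).op

/-- The natural transformation `Hom_𝓜(−, M1) ⟶ Hom_C(Ω(−), X)|_𝓜` induced by
`f : ΩM1 ⟶ X`, sending `a : m ⟶ M1` to `Ωa ≫ f`. -/
def presMap (T : LeftTriangulated C) (𝓜 : Set C) {M1 X : C} (f : T.loop.obj M1 ⟶ X) :
    (resYoneda 𝓜).obj M1 ⟶ (loopResYoneda T 𝓜).obj X where
  app m := AddCommGrpCat.ofHom
    (AddMonoidHom.mk' (fun a => T.loop.map a ≫ f)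
      (by
        haveI := T.loop_additive
        intro a b
        show T.loop.map (a + b) ≫ f = T.loop.map a ≫ f + T.loop.map b ≫ f
        erw [Functor.map_add, Preadditive.add_comp]))
  naturality := by
    intro m m' φ
    ext a
    show T.loop.map (φ.unop.hom ≫ a) ≫ f =
      T.loop.map φ.unop.hom ≫ T.loop.map a ≫ f
    erw [Functor.map_comp, Category.assoc]

/-! Rotating the triangle twice gives `ΩM0 ⟶ ΩM1 ⟶ X ⟶ M0` and `ΩX ⟶ ΩM0 ⟶ ΩM1 ⟶ X`
(up to sign), whose maps are weak kernels. By rigidity every `α : Ωm ⟶ X` vanishes after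
`g`, hence lifts through `f`, and fullness of `Ω` writes the lift as `Ωa`. Dually,
`Ωa ≫ f = 0` lifts `Ωa` through `Ωh`, and full faithfulness of `Ω` turns `Ωa = Ωb ≫ Ωh` into
`a = b ≫ h`. -/

namespace LeftTriangulated

variable {T : LeftTriangulated C} {X Y Z : C} {x : T.loop.obj Z ⟶ X} {y : X ⟶ Y} {z : Y ⟶ Z}

lemma IsTri.rotate (hT : T.IsTri x y z) : T.IsTri (-T.loop.map z) x y :=
  T.ltr2 x y z hT

/-- (LTR3) against the rotated trivial triangle `Ω0 ⟶ Z = Z`: `y ≫ z` factors through its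
zero map `Ω0 ⟶ Z`. -/
lemma IsTri.comp_eq_zero (hT : T.IsTri x y z) : y ≫ z = 0 := by
  obtain ⟨φ, -, hφ⟩ := T.ltr3 x y z _ _ _ z (𝟙 Z) hT (T.ltr1_id Z).rotate (by simp)
  simpa using hφ

/-- Comparing with the trivial triangle `Ω0 ⟶ W = W ⟶ 0` via (LTR3). -/
lemma IsTri.exists_lift (hT : T.IsTri x y z) {W : C} (α : W ⟶ Y) (hα : α ≫ z = 0) :
    ∃ β : W ⟶ X, β ≫ y = α := by
  obtain ⟨β, -, hβ⟩ := T.ltr3 _ _ _ x y z α (0 : (0 : C) ⟶ Z) (T.ltr1_id W) hT (by simp [hα])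
  exact ⟨β, by simpa using hβ.symm⟩

lemma IsTri.loop_map_comp_eq_zero (hT : T.IsTri x y z) : T.loop.map z ≫ x = 0 := by
  simpa using hT.rotate.rotate.comp_eq_zero

lemma IsTri.exists_loop_map_lift (hT : T.IsTri x y z) {W : C} (α : W ⟶ T.loop.obj Z)
    (hα : α ≫ x = 0) : ∃ β : W ⟶ T.loop.obj Y, β ≫ T.loop.map z = α := by
  obtain ⟨β, hβ⟩ := hT.rotate.rotate.exists_lift α hα
  exact ⟨-β, by simpa using hβ⟩

variable {M0 M1 m : C} {f : T.loop.obj M1 ⟶ X} {g : X ⟶ M0} {h : M0 ⟶ M1}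

lemma IsTri.exists_loop_map_comp_eq (hT : T.IsTri f g h)
    (hrigid : ∀ φ : T.loop.obj m ⟶ M0, φ = 0)
    (hfull : Function.Surjective (T.loop.map : (m ⟶ M1) → _)) (α : T.loop.obj m ⟶ X) :
    ∃ a : m ⟶ M1, T.loop.map a ≫ f = α := by
  obtain ⟨β, hβ⟩ := hT.rotate.exists_lift α (hrigid _)
  obtain ⟨a, rfl⟩ := hfull β
  exact ⟨a, hβ⟩

lemma IsTri.loop_map_comp_eq_zero_iff (hT : T.IsTri f g h)
    (hfull : Function.Surjective (T.loop.map : (m ⟶ M0) → _))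
    (hfaithful : Function.Injective (T.loop.map : (m ⟶ M1) → _)) (a : m ⟶ M1) :
    T.loop.map a ≫ f = 0 ↔ ∃ b : m ⟶ M0, b ≫ h = a := by
  have := T.loop_additive
  constructor
  · intro ha
    obtain ⟨β, hβ⟩ := hT.exists_loop_map_lift _ ha
    obtain ⟨b, rfl⟩ := hfull β
    exact ⟨b, hfaithful (by simpa using hβ)⟩
  · rintro ⟨b, rfl⟩
    simp [hT.loop_map_comp_eq_zero]

end LeftTriangulated

def yonedaToResYoneda {D : Type u'} [Category.{v'} D] [Preadditive D] {𝓜 : Set D} {M : D}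
    (hM : M ∈ 𝓜) :
    preadditiveYoneda.obj (⟨M, hM⟩ : Subcat 𝓜) ⟶ (resYoneda 𝓜).obj M where
  app _ := AddCommGrpCat.ofHom (AddMonoidHom.mk' (fun a => a.hom) (fun _ _ => rfl))

lemma finPres_of_resYoneda_exact {D : Type u'} [Category.{v'} D] [Preadditive D] {𝓜 : Set D}
    {M0 M1 : D} (hM0 : M0 ∈ 𝓜) (hM1 : M1 ∈ 𝓜)
    (h : M0 ⟶ M1) {F : (Subcat 𝓜)ᵒᵖ ⥤ AddCommGrpCat.{v'}} (π : (resYoneda 𝓜).obj M1 ⟶ F)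
    (hsurj : ∀ m : Subcat 𝓜, Function.Surjective (π.app (op m)))
    (hexact : ∀ (m : Subcat 𝓜) (a : ((resYoneda 𝓜).obj M1).obj (op m)),
      π.app (op m) a = 0 ↔ ∃ b, ((resYoneda 𝓜).map h).app (op m) b = a) :
    FinPres F := by
  refine ⟨⟨M0, hM0⟩, ⟨M1, hM1⟩, ObjectProperty.homMk h, yonedaToResYoneda hM1 ≫ π,
    fun m α => ?_, fun m a => (hexact m a.hom).trans ⟨?_, ?_⟩⟩
  · obtain ⟨a, ha⟩ := hsurj m α
    exact ⟨ObjectProperty.homMk a, ha⟩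
  · rintro ⟨b, hb⟩
    exact ⟨ObjectProperty.homMk b, InducedCategory.Hom.ext hb⟩
  · rintro ⟨b, rfl⟩
    exact ⟨b.hom, rfl⟩

/-- Let `C` be a left triangulated category and `𝓜` a rigid
subcategory on which `Ω` is fully faithful.  For any left triangle
`ΩM1 ⟶f X ⟶g M0 ⟶h M1` with `M0, M1 ∈ 𝓜`, the sequence
`Hom_𝓜(−,M0) ⟶ Hom_𝓜(−,M1) ⟶ H(X) ⟶ 0` is exact in `Mod 𝓜`, where
`H(X) = Hom_C(Ω(−),X)|_𝓜`; in particular `H(X)` is finitely presented. -/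
theorem stmt13 (T : LeftTriangulated C) (𝓜 : Set C)
    (rigid : ∀ ⦃m m' : C⦄, m ∈ 𝓜 → m' ∈ 𝓜 → ∀ φ : T.loop.obj m ⟶ m', φ = 0)
    (LC1 : ∀ ⦃m m' : C⦄, m ∈ 𝓜 → m' ∈ 𝓜 →
      Function.Bijective (fun φ : m ⟶ m' => T.loop.map φ))
    {X M0 M1 : C} (hM0 : M0 ∈ 𝓜) (hM1 : M1 ∈ 𝓜)
    (f : T.loop.obj M1 ⟶ X) (g : X ⟶ M0) (h : M0 ⟶ M1) (hT : T.IsTri f g h) :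
    (∀ m : Subcat 𝓜, Function.Surjective ((presMap T 𝓜 f).app (op m))) ∧
    (∀ (m : Subcat 𝓜) (x : ((resYoneda 𝓜).obj M1).obj (op m)),
      (presMap T 𝓜 f).app (op m) x = 0 ↔
        ∃ y, ((resYoneda 𝓜).map h).app (op m) y = x) ∧
    FinPres ((loopResYoneda T 𝓜).obj X) := by
  have surj : ∀ m : Subcat 𝓜, Function.Surjective ((presMap T 𝓜 f).app (op m)) :=
    fun m => hT.exists_loop_map_comp_eq (rigid m.2 hM0) (LC1 m.2 hM1).surjective
  have exactness : ∀ (m : Subcat 𝓜) (x : ((resYoneda 𝓜).obj M1).obj (op m)),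
      (presMap T 𝓜 f).app (op m) x = 0 ↔ ∃ y, ((resYoneda 𝓜).map h).app (op m) y = x :=
    fun m => hT.loop_map_comp_eq_zero_iff (LC1 m.2 hM0).surjective (LC1 m.2 hM1).injective
  exact ⟨surj, exactness, finPres_of_resYoneda_exact hM0 hM1 h _ surj exactness⟩
end

section
/- Let B be an exact category with enough projectives, P its subcategory of projectives, and M a rigid subcategory containing P. In the stable category B̲ = B/P, for every left triangle ΩM'' →f̲ X →g̲ M' →h̲ M'' with M', M'' ∈ M arising from a conflation 0 → X → M' → M'' → 0, and every Y in the subcategory of objects admitting a conflation 0 → Y → N' → N'' → 0 with N', N'' ∈ M, any morphism t̲: X → Y in B̲ with t̲ f̲ = 0 factors through g̲ in B̲. That is, condition (LC2) holds for M̲ in B̲. -/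
open CategoryTheory CategoryTheory.Limits Opposite ZeroObject

universe v u v' u' v'' u''

open ExactStructure

variable {B : Type u} [Category.{v} B] [Preadditive B] [HasZeroObject B]

/-- Auxiliary: a morphism into an object of a rigid subcategory `𝓜` extends along
any inflation whose cokernel lies in `𝓜`. -/
theorem extend_along_infl (E : ExactStructure B) (𝓜 : Set B)
    (rigid : ∀ ⦃M M' : B⦄, M ∈ 𝓜 → M' ∈ 𝓜 →
      ∀ ⦃Y : B⦄ (i : M' ⟶ Y) (p : Y ⟶ M), E.IsConf i p → ∃ r : Y ⟶ M', i ≫ r = 𝟙 M')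
    {OM P'' M'' W : B} (hM'' : M'' ∈ 𝓜) (hW : W ∈ 𝓜)
    (i : OM ⟶ P'') (d : P'' ⟶ M'') (hconf : E.IsConf i d) (a : OM ⟶ W) :
    ∃ α : P'' ⟶ W, i ≫ α = a := by
  obtain ⟨Z, inl, inr, hpo, C, p, hconfp⟩ := E.pushout_infl i a ⟨M'', d, hconf⟩
  obtain ⟨cokd⟩ := E.isCokernel i d hconf
  obtain ⟨cokp⟩ := E.isCokernel inr p hconfp
  have hid0 : i ≫ d = 0 := E.comp_zero i d hconf
  have hinrp0 : inr ≫ p = 0 := E.comp_zero inr p hconfp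
  have hw : i ≫ inl = a ≫ inr := hpo.w
  set p' : Z ⟶ M'' := hpo.desc d 0 (by rw [hid0, Limits.comp_zero]) with hp'
  have hinl_p' : inl ≫ p' = d := hpo.inl_desc _ _ _
  have hinr_p' : inr ≫ p' = 0 := hpo.inr_desc _ _ _
  obtain ⟨φ, hφ⟩ := CokernelCofork.IsColimit.desc' cokp p' hinr_p'
  simp only [Cofork.π_ofπ] at hφ
  have h1 : i ≫ inl ≫ p = 0 := by
    rw [← Category.assoc, hw, Category.assoc, hinrp0, Limits.comp_zero]
  obtain ⟨ψ, hψ⟩ := CokernelCofork.IsColimit.desc' cokd (inl ≫ p) h1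
  simp only [Cofork.π_ofπ] at hψ
  have hψφ : ψ ≫ φ = 𝟙 M'' := by
    apply Cofork.IsColimit.hom_ext cokd
    simp only [Cofork.π_ofπ]
    rw [← Category.assoc, hψ, Category.assoc, hφ, hinl_p']
    exact (Category.comp_id _).symm
  have hp'ψ : p' ≫ ψ = p := by
    apply hpo.hom_ext
    · rw [← Category.assoc, hinl_p', hψ]
    · rw [← Category.assoc, hinr_p', zero_comp, hinrp0]
  have hφψ : φ ≫ ψ = 𝟙 C := by
    apply Cofork.IsColimit.hom_ext cokp
    simp only [Cofork.π_ofπ]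
    rw [← Category.assoc, hφ, hp'ψ]
    exact (Category.comp_id _).symm
  have hconf'' : E.IsConf inr p' :=
    E.iso_closed inr p inr p' (Iso.refl W) (Iso.refl Z) ⟨φ, ψ, hφψ, hψφ⟩ hconfp
      (by simp) (by simpa using hφ)
  obtain ⟨r, hr⟩ := rigid hM'' hW inr p' hconf''
  exact ⟨inl ≫ r, by rw [← Category.assoc, hw, Category.assoc, hr, Category.comp_id]⟩

/-- Let `B` be an exact category with enough projectives, `P` its
subcategory of projectives and `𝓜` a rigid subcategory containing `P`.  Consider a
left triangle `ΩM'' ⟶f X ⟶g M' ⟶h M''` in the stable category `B̲ = B/P` arising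
from a conflation `0 → X → M' → M'' → 0` with `M', M'' ∈ 𝓜`: here `ΩM''` is a
syzygy of `M''`, i.e. there is a conflation `0 → ΩM'' ⟶i P'' ⟶d M'' → 0` with `P''`
projective, and `f : ΩM'' ⟶ X` is the connecting morphism, i.e. there is `q : P'' ⟶ M'`
with `i ≫ q = f ≫ g` and `q ≫ h = d`.  Then for every object `Y` admitting a
conflation `0 → Y → N' → N'' → 0` with `N', N'' ∈ 𝓜` and every `t : X ⟶ Y` whose
composite with `f` vanishes in `B̲` (i.e. `f ≫ t` factors through a projective),
the morphism `t` factors through `g` in `B̲`.  That is, condition (LC2) holds for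
`𝓜̲` in `B̲`. -/
theorem stmt17 (E : ExactStructure B) (hE : E.EnoughProj) (𝓜 : Set B)
    (rigid : ∀ ⦃M M' : B⦄, M ∈ 𝓜 → M' ∈ 𝓜 →
      ∀ ⦃Y : B⦄ (i : M' ⟶ Y) (p : Y ⟶ M), E.IsConf i p → ∃ r : Y ⟶ M', i ≫ r = 𝟙 M')
    (hproj : ∀ P : B, E.Proj P → P ∈ 𝓜)
    ⦃X M' M'' OM P'' : B⦄ (hM' : M' ∈ 𝓜) (hM'' : M'' ∈ 𝓜)
    (g : X ⟶ M') (h : M' ⟶ M'') (hconf : E.IsConf g h)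
    (i : OM ⟶ P'') (d : P'' ⟶ M'') (hP'' : E.Proj P'') (hconf' : E.IsConf i d)
    (f : OM ⟶ X) (q : P'' ⟶ M') (hq1 : i ≫ q = f ≫ g) (hq2 : q ≫ h = d)
    ⦃Y N' N'' : B⦄ (hN' : N' ∈ 𝓜) (hN'' : N'' ∈ 𝓜)
    (g' : Y ⟶ N') (h' : N' ⟶ N'') (hconfY : E.IsConf g' h')
    (t : X ⟶ Y) (ht : FactorsThru {P : B | E.Proj P} (f ≫ t)) :
    ∃ s : M' ⟶ Y, FactorsThru {P : B | E.Proj P} (t - g ≫ s) := by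
  obtain ⟨P, hP, a, b, hab⟩ := ht
  have hg'h' : g' ≫ h' = 0 := E.comp_zero _ _ hconfY
  have hgh : g ≫ h = 0 := E.comp_zero _ _ hconf
  have hid : i ≫ d = 0 := E.comp_zero _ _ hconf'
  obtain ⟨cokg⟩ := E.isCokernel g h hconf
  obtain ⟨cokd⟩ := E.isCokernel i d hconf'
  obtain ⟨kerg'⟩ := E.isKernel g' h' hconfY
  -- Step 1: extend t ≫ g' along g using rigidity
  obtain ⟨u, hu⟩ := extend_along_infl E 𝓜 rigid hM'' hN' g h hconf (t ≫ g')
  -- Step 2: v : M'' ⟶ N'' with h ≫ v = u ≫ h'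
  obtain ⟨v, hv⟩ := CokernelCofork.IsColimit.desc' cokg (u ≫ h')
    (by rw [← Category.assoc, hu, Category.assoc, hg'h', Limits.comp_zero])
  simp only [Cofork.π_ofπ] at hv
  -- Step 3: extend a along i using rigidity (P ∈ 𝓜)
  obtain ⟨α, hα⟩ := extend_along_infl E 𝓜 rigid hM'' (hproj P hP) i d hconf' a
  -- Step 4: the corrected lift ẽ
  set et : P'' ⟶ N' := q ≫ u - α ≫ (b ≫ g') with het
  have hiet : i ≫ et = 0 := by
    have e1 : i ≫ q ≫ u = a ≫ b ≫ g' := by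
      rw [← Category.assoc, hq1, Category.assoc, hu, ← Category.assoc, ← hab, Category.assoc]
    have e2 : i ≫ α ≫ b ≫ g' = a ≫ b ≫ g' := by rw [← Category.assoc, hα]
    simp only [het, Preadditive.comp_sub, e1, e2, sub_self]
  have heth' : et ≫ h' = d ≫ v := by
    simp only [het, Preadditive.sub_comp, Category.assoc, hg'h', Limits.comp_zero, sub_zero]
    rw [← hv, ← Category.assoc, hq2]
  -- Step 5: w : M'' ⟶ N' with d ≫ w = ẽ
  obtain ⟨w, hw⟩ := CokernelCofork.IsColimit.desc' cokd et hiet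
  simp only [Cofork.π_ofπ] at hw
  have hwh' : w ≫ h' = v := by
    apply Cofork.IsColimit.hom_ext cokd
    simp only [Cofork.π_ofπ]
    rw [← Category.assoc, hw, heth']
  -- Step 6: s : M' ⟶ Y with s ≫ g' = u - h ≫ w
  obtain ⟨s, hs⟩ := KernelFork.IsLimit.lift' kerg' (u - h ≫ w)
    (by simp only [Preadditive.sub_comp, Category.assoc, hwh', hv, sub_self])
  simp only [Fork.ι_ofι] at hs
  -- Step 7: t = g ≫ s
  have hts : t = g ≫ s := by
    apply Fork.IsLimit.hom_ext kerg'
    simp only [Fork.ι_ofι]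
    rw [Category.assoc, hs, Preadditive.comp_sub, hu, ← Category.assoc, hgh,
      zero_comp, sub_zero]
  exact ⟨s, P'', hP'', 0, 0, by rw [hts, sub_self, zero_comp]⟩
end
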